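/- Let a ∈ Δ_n^*, b ∈ Δ_m^*, g ∈ Δ_r^*, C ∈ ℝ^{n×m}, ε ≥ 0 and N ≥ 1. Set L_ε := sqrt( 2( ‖C‖₂² ‖Diag(1/g)‖₂² + ε² ) ), where ‖·‖₂ denotes the spectral norm (so ‖Diag(1/g)‖₂ = 1/min_i g_i), and γ := 1/(2 L_ε). Let (Q₀, R₀) ∈ Π_{a,g} × Π_{b,g} have strictly positive entries and define the mirror-descent iterates x_{k+1} := G_ε(x_k, γ) for k ≥ 0, starting from x₀ := (Q₀, R₀) (the iterates remain entrywise strictly positive, so the recursion is well defined). Then min_{0 ≤ k ≤ N−1} Δ_ε(x_k, γ) ≤ 4 L_ε D₀ / N, where D₀ := f_ε(Q₀, R₀) − LOT_{r,g,ε}. -/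

import Mathlib

/-!
Each iterate `x_{k+1}` minimises `u ↦ ⟨∇f_ε(x_k), u⟩ + 2L·KL(u, x_k)` over the convex polytope
`Π_{a,g} × Π_{b,g}`. Because `s ↦ s log s` has slope `-∞` at `0`, the minimiser keeps positive
entries, and first-order optimality then gives `⟨∇f_ε(x_k), x_{k+1} - x_k⟩ ≤ -2L·J_k`, where
`J_k = Σ (x_{k+1} - x_k)(log x_{k+1} - log x_k)` is the Jeffreys divergence.
On the other side, `f_ε` is smooth relative to the entropy: its bilinear part deviates from its
linearisation by at most `‖C‖₂‖Diag(1/g)‖₂/2 · ‖x_{k+1} - x_k‖² ≤ ‖C‖₂‖Diag(1/g)‖₂/2 · J_k`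
(the entries lie in `(0, 1]`, where `log` expands distances), and its entropic part by at most
`ε J_k`. Since `‖C‖₂‖Diag(1/g)‖₂/2 + ε ≤ L`, this yields `f_ε(x_{k+1}) ≤ f_ε(x_k) - L J_k`.
Telescoping down to `LOT_{r,g,ε} ≤ f_ε(x_N)` produces `k < N` with `L J_k ≤ D₀ / N`, and
`Δ_ε(x_k, γ) = 4L²(J_k - 4) ≤ 4 L D₀ / N`.
-/

open Matrix Finset Real
open scoped RealInnerProductSpace

noncomputable section

/-- Real matrices indexed by `Fin n × Fin m`. -/
abbrev Mat (n m : ℕ) : Type := Matrix (Fin n) (Fin m) ℝ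

/-- Triples `(Q, R, g)` as in the low-rank OT factorization. -/
abbrev LRTriple (n m r : ℕ) : Type := Mat n r × Mat m r × (Fin r → ℝ)

/-- Pairs `(Q, R)` (fixed middle marginal `g`). -/
abbrev LRPair (n m r : ℕ) : Type := Mat n r × Mat m r

/-- The interior of the probability simplex Δ_n^*: strictly positive entries summing to 1. -/
def posSimplex (n : ℕ) : Set (Fin n → ℝ) := {a | (∀ i, 0 < a i) ∧ ∑ i, a i = 1}

/-- Frobenius inner product ⟨C, P⟩ = Σ_{ij} C_ij P_ij. -/
def frobInner {n m : ℕ} (C P : Mat n m) : ℝ := ∑ i, ∑ j, C i j * P i j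

/-- Entropy H(P) = −Σ_{ij} P_ij (log P_ij − 1) (with 0 log 0 = 0, as `Real.log 0 = 0`). -/
def matH {n m : ℕ} (P : Mat n m) : ℝ := -∑ i, ∑ j, P i j * (Real.log (P i j) - 1)

/-- Entropy of a vector. -/
def vecH {r : ℕ} (g : Fin r → ℝ) : ℝ := -∑ i, g i * (Real.log (g i) - 1)

/-- Kullback–Leibler divergence KL(P,Q) = Σ_{ij} P_ij (log(P_ij/Q_ij) − 1). -/
def matKL {n m : ℕ} (P Q : Mat n m) : ℝ := ∑ i, ∑ j, P i j * (Real.log (P i j / Q i j) - 1)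

/-- Kullback–Leibler divergence of vectors. -/
def vecKL {r : ℕ} (p q : Fin r → ℝ) : ℝ := ∑ i, p i * (Real.log (p i / q i) - 1)

/-- KL divergence on triples, summing over the three components. -/
def tripleKL {n m r : ℕ} (x y : LRTriple n m r) : ℝ :=
  matKL x.1 y.1 + matKL x.2.1 y.2.1 + vecKL x.2.2 y.2.2

/-- KL divergence on pairs, summing over the two components. -/
def pairKL {n m r : ℕ} (x y : LRPair n m r) : ℝ := matKL x.1 y.1 + matKL x.2 y.2

/-- Euclidean inner product on triples. -/
def tripleInner {n m r : ℕ} (x y : LRTriple n m r) : ℝ :=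
  frobInner x.1 y.1 + frobInner x.2.1 y.2.1 + ∑ i, x.2.2 i * y.2.2 i

/-- Euclidean inner product on pairs. -/
def pairInner {n m r : ℕ} (x y : LRPair n m r) : ℝ := frobInner x.1 y.1 + frobInner x.2 y.2

/-- Squared Euclidean norm of a triple (Frobenius on matrix blocks). -/
def tripleNormSq {n m r : ℕ} (x : LRTriple n m r) : ℝ :=
  (∑ i, ∑ j, (x.1 i j) ^ 2) + (∑ i, ∑ j, (x.2.1 i j) ^ 2) + ∑ i, (x.2.2 i) ^ 2

/-- Squared Euclidean norm of a pair (Frobenius on matrix blocks). -/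
def pairNormSq {n m r : ℕ} (x : LRPair n m r) : ℝ :=
  (∑ i, ∑ j, (x.1 i j) ^ 2) + (∑ i, ∑ j, (x.2 i j) ^ 2)

/-- The transport polytope Π_{a,b} of couplings with marginals `a` and `b`. -/
def couplings {n m : ℕ} (a : Fin n → ℝ) (b : Fin m → ℝ) : Set (Mat n m) :=
  {P | (∀ i j, 0 ≤ P i j) ∧ (∀ i, ∑ j, P i j = a i) ∧ (∀ j, ∑ i, P i j = b j)}

/-- The nonnegative rank: smallest `q` such that `M` is a sum of `q` nonnegative
rank-one matrices. -/
def nonnegRank {n m : ℕ} (M : Mat n m) : ℕ :=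
  sInf {q : ℕ | ∃ f : Fin q → Mat n m,
    (∀ i, (f i).rank = 1 ∧ ∀ k l, 0 ≤ f i k l) ∧ M = ∑ i, f i}

/-- Π_{a,b}(r): couplings with nonnegative rank at most `r`. -/
def couplingsRank {n m : ℕ} (a : Fin n → ℝ) (b : Fin m → ℝ) (r : ℕ) : Set (Mat n m) :=
  {P | P ∈ couplings a b ∧ nonnegRank P ≤ r}

/-- 𝒞₁(a,b,r): `Q, R` nonnegative with row sums `a`, `b`, and `g > 0`. -/
def C1set {n m : ℕ} (a : Fin n → ℝ) (b : Fin m → ℝ) (r : ℕ) : Set (LRTriple n m r) :=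
  {x | (∀ i j, 0 ≤ x.1 i j) ∧ (∀ i j, 0 ≤ x.2.1 i j) ∧ (∀ i, 0 < x.2.2 i) ∧
    (∀ i, ∑ j, x.1 i j = a i) ∧ (∀ i, ∑ j, x.2.1 i j = b i)}

/-- The closure of 𝒞₁(a,b,r): as 𝒞₁ but only `g ≥ 0`. -/
def C1barSet {n m : ℕ} (a : Fin n → ℝ) (b : Fin m → ℝ) (r : ℕ) : Set (LRTriple n m r) :=
  {x | (∀ i j, 0 ≤ x.1 i j) ∧ (∀ i j, 0 ≤ x.2.1 i j) ∧ (∀ i, 0 ≤ x.2.2 i) ∧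
    (∀ i, ∑ j, x.1 i j = a i) ∧ (∀ i, ∑ j, x.2.1 i j = b i)}

/-- 𝒞₁(a,b,r,α): as 𝒞₁ but with the lower bound `g ≥ α`. -/
def C1setAlpha {n m : ℕ} (a : Fin n → ℝ) (b : Fin m → ℝ) (r : ℕ) (α : ℝ) :
    Set (LRTriple n m r) :=
  {x | (∀ i j, 0 ≤ x.1 i j) ∧ (∀ i j, 0 ≤ x.2.1 i j) ∧ (∀ i, α ≤ x.2.2 i) ∧
    (∀ i, ∑ j, x.1 i j = a i) ∧ (∀ i, ∑ j, x.2.1 i j = b i)}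

/-- 𝒞₂(r): `Q, R, g` nonnegative with both column sums equal to `g`. -/
def C2set {n m : ℕ} (r : ℕ) : Set (LRTriple n m r) :=
  {x | (∀ i j, 0 ≤ x.1 i j) ∧ (∀ i j, 0 ≤ x.2.1 i j) ∧ (∀ i, 0 ≤ x.2.2 i) ∧
    (∀ j, ∑ i, x.1 i j = x.2.2 j) ∧ (∀ j, ∑ i, x.2.1 i j = x.2.2 j)}

/-- 𝒞(a,b,r) = 𝒞₁(a,b,r) ∩ 𝒞₂(r). -/
def Cset {n m : ℕ} (a : Fin n → ℝ) (b : Fin m → ℝ) (r : ℕ) : Set (LRTriple n m r) :=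
  C1set a b r ∩ C2set r

/-- 𝒞(a,b,r,α) = 𝒞₁(a,b,r,α) ∩ 𝒞₂(r). -/
def CsetAlpha {n m : ℕ} (a : Fin n → ℝ) (b : Fin m → ℝ) (r : ℕ) (α : ℝ) :
    Set (LRTriple n m r) :=
  C1setAlpha a b r α ∩ C2set r

/-- F_ε(Q,R,g) = ⟨C, Q Diag(1/g) Rᵀ⟩ − ε H((Q,R,g)). -/
def Fobj {n m r : ℕ} (C : Mat n m) (ε : ℝ) (x : LRTriple n m r) : ℝ :=
  frobInner C (x.1 * Matrix.diagonal (fun i => (x.2.2 i)⁻¹) * x.2.1ᵀ) -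
    ε * (matH x.1 + matH x.2.1 + vecH x.2.2)

/-- LOT_{r,ε} = inf of F_ε over 𝒞(a,b,r). -/
def LOTre {n m : ℕ} (a : Fin n → ℝ) (b : Fin m → ℝ) (C : Mat n m) (ε : ℝ) (r : ℕ) : ℝ :=
  sInf (Fobj C ε '' Cset a b r)

/-- LOT_{r,ε,α} = inf of F_ε over 𝒞(a,b,r,α). -/
def LOTreAlpha {n m : ℕ} (a : Fin n → ℝ) (b : Fin m → ℝ) (C : Mat n m) (ε : ℝ) (r : ℕ)
    (α : ℝ) : ℝ :=
  sInf (Fobj C ε '' CsetAlpha a b r α)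

/-- Spectral norm (ℓ²→ℓ² operator norm) of a matrix. -/
def specNorm {n m : ℕ} (C : Mat n m) : ℝ :=
  ‖LinearMap.toContinuousLinearMap (Matrix.toEuclideanLin C)‖

/-- The gradient ∇F_ε(Q,R,g) =
(C R Diag(1/g) + ε log Q, Cᵀ Q Diag(1/g) + ε log R, −𝒟(Qᵀ C R)/g² + ε log g). -/
def gradF {n m r : ℕ} (C : Mat n m) (ε : ℝ) (x : LRTriple n m r) : LRTriple n m r :=
  (Matrix.of fun i k => (C * x.2.1) i k * (x.2.2 k)⁻¹ + ε * Real.log (x.1 i k),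
   Matrix.of fun j k => (Cᵀ * x.1) j k * (x.2.2 k)⁻¹ + ε * Real.log (x.2.1 j k),
   fun k => -((x.1ᵀ * C * x.2.1) k k) / (x.2.2 k) ^ 2 + ε * Real.log (x.2.2 k))

/-- Entrywise logarithm of a triple. -/
def logTriple {n m r : ℕ} (x : LRTriple n m r) : LRTriple n m r :=
  (Matrix.of fun i k => Real.log (x.1 i k), Matrix.of fun j k => Real.log (x.2.1 j k),
   fun k => Real.log (x.2.2 k))

/-- The feasible set Π_{a,g} × Π_{b,g}. -/
def pairFeasible {n m r : ℕ} (a : Fin n → ℝ) (b : Fin m → ℝ) (g : Fin r → ℝ) :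
    Set (LRPair n m r) :=
  {u | u.1 ∈ couplings a g ∧ u.2 ∈ couplings b g}

/-- f_ε(Q,R) = ⟨C, Q Diag(1/g) Rᵀ⟩ − ε (H(Q) + H(R)) for fixed `g`. -/
def fobj {n m r : ℕ} (C : Mat n m) (g : Fin r → ℝ) (ε : ℝ) (x : LRPair n m r) : ℝ :=
  frobInner C (x.1 * Matrix.diagonal (fun i => (g i)⁻¹) * x.2ᵀ) - ε * (matH x.1 + matH x.2)

/-- LOT_{r,g,ε} = inf of f_ε over Π_{a,g} × Π_{b,g}. -/
def LOTfix {n m r : ℕ} (a : Fin n → ℝ) (b : Fin m → ℝ) (g : Fin r → ℝ) (C : Mat n m)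
    (ε : ℝ) : ℝ :=
  sInf (fobj C g ε '' pairFeasible a b g)

/-- The gradient ∇f_ε(Q,R) = (C R Diag(1/g) + ε log Q, Cᵀ Q Diag(1/g) + ε log R). -/
def gradf {n m r : ℕ} (C : Mat n m) (g : Fin r → ℝ) (ε : ℝ) (x : LRPair n m r) :
    LRPair n m r :=
  (Matrix.of fun i k => (C * x.2) i k * (g k)⁻¹ + ε * Real.log (x.1 i k),
   Matrix.of fun j k => (Cᵀ * x.1) j k * (g k)⁻¹ + ε * Real.log (x.2 j k))

/-- Entrywise logarithm of a pair. -/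
def logPair {n m r : ℕ} (x : LRPair n m r) : LRPair n m r :=
  (Matrix.of fun i k => Real.log (x.1 i k), Matrix.of fun j k => Real.log (x.2 j k))

end

lemma sub_le_log_sub_log {p q : ℝ} (hq : 0 < q) (hqp : q ≤ p) (hp1 : p ≤ 1) :
    p - q ≤ log p - log q := by
  have hp : 0 < p := hq.trans_le hqp
  have h := one_sub_inv_le_log_of_pos (div_pos hp hq)
  rw [log_div hp.ne' hq.ne', inv_div] at h
  have : p - q ≤ 1 - q / p := by
    rw [one_sub_div hp.ne', le_div_iff₀ hp]
    nlinarith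
  linarith

lemma sq_sub_le_sub_mul_log_sub {p q : ℝ} (hp : 0 < p) (hp1 : p ≤ 1) (hq : 0 < q) (hq1 : q ≤ 1) :
    (p - q) ^ 2 ≤ (p - q) * (log p - log q) := by
  rcases le_total q p with h | h
  · nlinarith [sub_le_log_sub_log hq h hp1]
  · nlinarith [sub_le_log_sub_log hp h hq1]

lemma mul_log_sub_sub_le {p q : ℝ} (hp : 0 < p) (hq : 0 < q) :
    p * (log p - log q) - p + q ≤ (p - q) * (log p - log q) := by
  have h := one_sub_inv_le_log_of_pos (div_pos hq hp)
  rw [log_div hq.ne' hp.ne', inv_div, one_sub_div hq.ne', div_le_iff₀ hq] at h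
  nlinarith

lemma neg_one_le_mul_log_sub_one {p : ℝ} (hp : 0 ≤ p) : -1 ≤ p * (log p - 1) := by
  rcases hp.eq_or_lt with rfl | hp
  · simp
  · have h := mul_le_mul_of_nonneg_left (one_sub_inv_le_log_of_pos hp) hp.le
    rw [mul_sub, mul_inv_cancel₀ hp.ne', mul_one] at h
    linarith

lemma hasDerivAt_mul_log_div_sub_one {a s : ℝ} (ha : 0 < a) (hs : 0 < s) :
    HasDerivAt (fun s => s * (log (s / a) - 1)) (log (s / a)) s := by
  have hlog := ((hasDerivAt_id' s).div_const a).log (div_pos hs ha).ne'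
  refine ((hasDerivAt_id' s).fun_mul (hlog.sub_const 1)).congr_deriv ?_
  field_simp
  ring

lemma nonneg_of_isMinOn_Icc_of_hasDerivAt {ψ : ℝ → ℝ} {d : ℝ}
    (hmin : IsMinOn ψ (Set.Icc 0 1) 0) (hψ : HasDerivAt ψ d 0) : 0 ≤ d := by
  have hseg : segment ℝ (0:ℝ) (0 + 1) ⊆ Set.Icc 0 1 := by
    rw [zero_add, segment_eq_Icc zero_le_one]
  simpa using hmin.localize.hasFDerivWithinAt_nonneg hψ.hasFDerivAt.hasFDerivWithinAt
    (mem_posTangentConeAt_of_segment_subset hseg)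

section KLProx

open Filter Topology

variable {ι : Type*} [Fintype ι]

-- The mirror step `G_ε(x, γ)` minimises `klProxObj (∇f_ε x) (1 / γ) x` over the feasible set.
noncomputable def klProxObj (G : ι → ℝ) (c : ℝ) (x u : ι → ℝ) : ℝ :=
  ∑ e, G e * u e + c * ∑ e, u e * (log (u e / x e) - 1)

lemma klProxObj_eq_sum (G : ι → ℝ) (c : ℝ) (x u : ι → ℝ) :
    klProxObj G c x u = ∑ e, (G e * u e + c * (u e * (log (u e / x e) - 1))) := by
  rw [klProxObj, Finset.mul_sum, Finset.sum_add_distrib]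

lemma convexOn_mul_log_div_sub_one {a : ℝ} (ha : 0 < a) :
    ConvexOn ℝ (Set.Ici 0) fun s => s * (log (s / a) - 1) := by
  have h := convexOn_mul_log.add
    (LinearMap.convexOn (-(1 + log a) • LinearMap.id) (convex_Ici (0:ℝ)))
  refine h.congr fun s hs => ?_
  rcases (Set.mem_Ici.1 hs).eq_or_lt with rfl | hs
  · simp
  · simp [log_div hs.ne' ha.ne']
    ring

lemma klProxObj_segment_le (G : ι → ℝ) {c : ℝ} (hc : 0 ≤ c) {x y : ι → ℝ}
    (hx : ∀ e, 0 < x e) (hy : ∀ e, 0 ≤ y e) {e₀ : ι} (hy₀ : y e₀ = 0) {t : ℝ} (ht₀ : 0 < t)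
    (ht₁ : t ≤ 1) :
    klProxObj G c x (y + t • (x - y)) ≤
      (1 - t) * klProxObj G c x y + t * klProxObj G c x x + c * t * x e₀ * log t := by
  classical
  have hpoint : ∀ e, G e * (y + t • (x - y)) e +
      c * ((y + t • (x - y)) e * (log ((y + t • (x - y)) e / x e) - 1)) ≤
      (1 - t) * (G e * y e + c * (y e * (log (y e / x e) - 1))) +
        t * (G e * x e + c * (x e * (log (x e / x e) - 1))) +
        if e = e₀ then c * t * x e₀ * log t else 0 := by
    intro e
    have hz : (y + t • (x - y)) e = (1 - t) * y e + t * x e := by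
      simp only [Pi.add_apply, Pi.smul_apply, Pi.sub_apply, smul_eq_mul]; ring
    rw [hz]
    rcases eq_or_ne e e₀ with rfl | he
    · rw [if_pos rfl, hy₀, div_self (hx e).ne', log_one, mul_zero, zero_add,
        mul_div_cancel_right₀ _ (hx e).ne']
      exact le_of_eq (by ring)
    · rw [if_neg he]
      have hconv := (convexOn_mul_log_div_sub_one (hx e)).2 (Set.mem_Ici.2 (hy e))
        (Set.mem_Ici.2 (hx e).le) (sub_nonneg.2 ht₁) ht₀.le (by ring)
      simp only [smul_eq_mul] at hconv
      nlinarith [mul_le_mul_of_nonneg_left hconv hc]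
  calc klProxObj G c x (y + t • (x - y))
      ≤ ∑ e, ((1 - t) * (G e * y e + c * (y e * (log (y e / x e) - 1))) +
          t * (G e * x e + c * (x e * (log (x e / x e) - 1))) +
          if e = e₀ then c * t * x e₀ * log t else 0) := by
        rw [klProxObj_eq_sum]; exact Finset.sum_le_sum fun e _ => hpoint e
    _ = _ := by
        rw [Finset.sum_add_distrib, Finset.sum_add_distrib, ← Finset.mul_sum, ← Finset.mul_sum,
          Finset.sum_ite_eq', if_pos (Finset.mem_univ _), klProxObj_eq_sum, klProxObj_eq_sum]

lemma pos_of_isMinOn_klProxObj {G : ι → ℝ} {c : ℝ} (hc : 0 < c) {K : Set (ι → ℝ)}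
    (hK : Convex ℝ K) {x y : ι → ℝ} (hx : ∀ e, 0 < x e) (hxK : x ∈ K) (hy : ∀ e, 0 ≤ y e)
    (hyK : y ∈ K) (hmin : IsMinOn (klProxObj G c x) K y) (e₀ : ι) : 0 < y e₀ := by
  -- If `y e₀ = 0`, moving from `y` towards `x` changes the objective at slope `c x e₀ log t → -∞`.
  by_contra hneg
  have hy₀ : y e₀ = 0 := le_antisymm (not_lt.1 hneg) (hy e₀)
  set δ := klProxObj G c x x - klProxObj G c x y
  have hslope : ∀ t ∈ Set.Ioc (0:ℝ) 1, 0 ≤ δ + c * x e₀ * log t := by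
    rintro t ⟨ht₀, ht₁⟩
    have hle := (isMinOn_iff.1 hmin) _ (hK.add_smul_sub_mem hyK hxK ⟨ht₀.le, ht₁⟩)
    have hseg := klProxObj_segment_le G hc.le hx hy hy₀ ht₀ ht₁
    have : 0 ≤ t * (δ + c * x e₀ * log t) := by nlinarith
    exact nonneg_of_mul_nonneg_right this ht₀
  have hlim : Tendsto (fun t => δ + c * x e₀ * log t) (𝓝[>] 0) atBot :=
    tendsto_atBot_add_const_left _ δ
      (tendsto_log_nhdsGT_zero.const_mul_atBot (mul_pos hc (hx e₀)))
  obtain ⟨t, hneg, ht⟩ := ((hlim.eventually (eventually_lt_atBot 0)).and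
    (Ioc_mem_nhdsGT (zero_lt_one' ℝ))).exists
  exact (hslope t ht).not_gt hneg

noncomputable def jeffreysDiv (p q : ι → ℝ) : ℝ := ∑ e, (p e - q e) * (log (p e) - log (q e))

lemma sum_mul_sub_nonneg_of_isMinOn_klProxObj {G : ι → ℝ} {c : ℝ} {K : Set (ι → ℝ)}
    (hK : Convex ℝ K) {x y : ι → ℝ} (hx : ∀ e, 0 < x e) (hxK : x ∈ K) (hy : ∀ e, 0 < y e)
    (hyK : y ∈ K) (hmin : IsMinOn (klProxObj G c x) K y) :
    0 ≤ ∑ e, (G e + c * log (y e / x e)) * (x e - y e) := by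
  have hderiv : HasDerivAt (fun t : ℝ => klProxObj G c x (y + t • (x - y)))
      (∑ e, (G e + c * log (y e / x e)) * (x e - y e)) 0 := by
    simp only [klProxObj_eq_sum]
    refine HasDerivAt.fun_sum fun e _ => ?_
    have hline : HasDerivAt (fun t : ℝ => (y + t • (x - y)) e) (x e - y e) 0 := by
      simpa using ((hasDerivAt_id (0:ℝ)).mul_const (x e - y e)).const_add (y e)
    have hθ := (hasDerivAt_mul_log_div_sub_one (hx e) (by simpa using hy e)).comp 0 hline
    convert (hline.const_mul (G e)).add (hθ.const_mul c) using 1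
    · rfl
    · simp only [zero_smul, add_zero]
      ring
  refine nonneg_of_isMinOn_Icc_of_hasDerivAt (isMinOn_iff.2 fun t ht => ?_) hderiv
  simpa using (isMinOn_iff.1 hmin) _ (hK.add_smul_sub_mem hyK hxK ht)

lemma sum_mul_sub_le_of_isMinOn_klProxObj {G : ι → ℝ} {c : ℝ} {K : Set (ι → ℝ)}
    (hK : Convex ℝ K) {x y : ι → ℝ} (hx : ∀ e, 0 < x e) (hxK : x ∈ K) (hy : ∀ e, 0 < y e)
    (hyK : y ∈ K) (hmin : IsMinOn (klProxObj G c x) K y) :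
    ∑ e, G e * (y e - x e) ≤ -(c * jeffreysDiv y x) := by
  have h := sum_mul_sub_nonneg_of_isMinOn_klProxObj hK hx hxK hy hyK hmin
  have hsplit : ∑ e, (G e + c * log (y e / x e)) * (x e - y e) =
      -(∑ e, G e * (y e - x e)) - c * jeffreysDiv y x := by
    simp only [jeffreysDiv, Finset.mul_sum, ← Finset.sum_neg_distrib, ← Finset.sum_sub_distrib]
    refine Finset.sum_congr rfl fun e _ => ?_
    rw [log_div (hy e).ne' (hx e).ne']
    ring
  linarith

lemma jeffreysDiv_nonneg {p q : ι → ℝ} (hp : ∀ e, 0 < p e) (hq : ∀ e, 0 < q e) :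
    0 ≤ jeffreysDiv p q := by
  refine Finset.sum_nonneg fun e _ => ?_
  rcases le_total (q e) (p e) with h | h
  · exact mul_nonneg (sub_nonneg.2 h) (sub_nonneg.2 (log_le_log (hq e) h))
  · exact mul_nonneg_of_nonpos_of_nonpos (sub_nonpos.2 h) (sub_nonpos.2 (log_le_log (hp e) h))

lemma sum_sq_sub_le_jeffreysDiv {p q : ι → ℝ} (hp : ∀ e, 0 < p e ∧ p e ≤ 1)
    (hq : ∀ e, 0 < q e ∧ q e ≤ 1) : ∑ e, (p e - q e) ^ 2 ≤ jeffreysDiv p q :=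
  Finset.sum_le_sum fun e _ => sq_sub_le_sub_mul_log_sub (hp e).1 (hp e).2 (hq e).1 (hq e).2

lemma sum_mul_log_sub_sub_le_jeffreysDiv {p q : ι → ℝ} (hp : ∀ e, 0 < p e) (hq : ∀ e, 0 < q e) :
    ∑ e, (p e * (log (p e) - log (q e)) - p e + q e) ≤ jeffreysDiv p q :=
  Finset.sum_le_sum fun e _ => mul_log_sub_sub_le (hp e) (hq e)

end KLProx

section Pairs

variable {n m r : ℕ}

abbrev PairIndex (n m r : ℕ) : Type := (Fin n × Fin r) ⊕ (Fin m × Fin r)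

def pairFlat : LRPair n m r →ₗ[ℝ] (PairIndex n m r → ℝ) where
  toFun u := Sum.elim (fun p => u.1 p.1 p.2) (fun p => u.2 p.1 p.2)
  map_add' _ _ := by ext (_ | _) <;> rfl
  map_smul' _ _ := by ext (_ | _) <;> rfl

lemma sum_pairFlat (F : ℝ → ℝ → ℝ) (u v : LRPair n m r) :
    ∑ e, F (pairFlat u e) (pairFlat v e) =
      ∑ i, ∑ k, F (u.1 i k) (v.1 i k) + ∑ j, ∑ k, F (u.2 j k) (v.2 j k) := by
  rw [Fintype.sum_sum_type, Fintype.sum_prod_type, Fintype.sum_prod_type]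
  rfl

lemma pairInner_eq_sum_pairFlat (u v : LRPair n m r) :
    pairInner u v = ∑ e, pairFlat u e * pairFlat v e :=
  (sum_pairFlat (· * ·) u v).symm

lemma pairKL_eq_sum_pairFlat (u v : LRPair n m r) :
    pairKL u v = ∑ e, pairFlat u e * (log (pairFlat u e / pairFlat v e) - 1) :=
  (sum_pairFlat (fun p q => p * (log (p / q) - 1)) u v).symm

lemma pairNormSq_eq_sum_pairFlat (u : LRPair n m r) :
    pairNormSq u = ∑ e, pairFlat u e ^ 2 :=
  (sum_pairFlat (fun p _ => p ^ 2) u u).symm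

lemma klProxObj_pairFlat (G : LRPair n m r) (c : ℝ) (x u : LRPair n m r) :
    klProxObj (pairFlat G) c (pairFlat x) (pairFlat u) = pairInner G u + c * pairKL u x := by
  rw [klProxObj, pairInner_eq_sum_pairFlat, pairKL_eq_sum_pairFlat]

lemma convex_couplings (a : Fin n → ℝ) (b : Fin m → ℝ) : Convex ℝ (couplings a b) := by
  rintro P ⟨hP₀, hProw, hPcol⟩ Q ⟨hQ₀, hQrow, hQcol⟩ s t hs ht hst
  refine ⟨fun i j => ?_, fun i => ?_, fun j => ?_⟩
  · simp only [Matrix.add_apply, Matrix.smul_apply, smul_eq_mul]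
    exact add_nonneg (mul_nonneg hs (hP₀ i j)) (mul_nonneg ht (hQ₀ i j))
  · simp only [Matrix.add_apply, Matrix.smul_apply, smul_eq_mul, Finset.sum_add_distrib,
      ← Finset.mul_sum, hProw, hQrow, ← add_mul, hst, one_mul]
  · simp only [Matrix.add_apply, Matrix.smul_apply, smul_eq_mul, Finset.sum_add_distrib,
      ← Finset.mul_sum, hPcol, hQcol, ← add_mul, hst, one_mul]

lemma convex_pairFeasible (a : Fin n → ℝ) (b : Fin m → ℝ) (g : Fin r → ℝ) :
    Convex ℝ (pairFeasible a b g) :=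
  (convex_couplings a g).prod (convex_couplings b g)

lemma sum_sum_eq_one_of_mem_couplings {a : Fin n → ℝ} (ha : a ∈ posSimplex n) {b : Fin m → ℝ}
    {P : Mat n m} (hP : P ∈ couplings a b) : ∑ i, ∑ j, P i j = 1 := by
  simp only [hP.2.1, ha.2]

lemma le_one_of_mem_couplings {a : Fin n → ℝ} (ha : a ∈ posSimplex n) {b : Fin m → ℝ}
    {P : Mat n m} (hP : P ∈ couplings a b) (i : Fin n) (j : Fin m) : P i j ≤ 1 :=
  calc P i j ≤ ∑ j', P i j' := Finset.single_le_sum (fun j' _ => hP.1 i j') (Finset.mem_univ j)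
    _ = a i := hP.2.1 i
    _ ≤ ∑ i', a i' := Finset.single_le_sum (fun i' _ => (ha.1 i').le) (Finset.mem_univ i)
    _ = 1 := ha.2

section Feasible

variable {a : Fin n → ℝ} {b : Fin m → ℝ} {g : Fin r → ℝ} {u : LRPair n m r}

lemma pairFlat_nonneg (hu : u ∈ pairFeasible a b g) (e : PairIndex n m r) :
    0 ≤ pairFlat u e := by
  rcases e with ⟨i, k⟩ | ⟨j, k⟩
  exacts [hu.1.1 i k, hu.2.1 j k]

lemma pairFlat_le_one (ha : a ∈ posSimplex n) (hb : b ∈ posSimplex m)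
    (hu : u ∈ pairFeasible a b g) (e : PairIndex n m r) : pairFlat u e ≤ 1 := by
  rcases e with ⟨i, k⟩ | ⟨j, k⟩
  exacts [le_one_of_mem_couplings ha hu.1 i k, le_one_of_mem_couplings hb hu.2 j k]

lemma sum_pairFlat_eq_two (ha : a ∈ posSimplex n) (hb : b ∈ posSimplex m)
    (hu : u ∈ pairFeasible a b g) : ∑ e, pairFlat u e = 2 := by
  rw [sum_pairFlat (fun p _ => p) u u, sum_sum_eq_one_of_mem_couplings ha hu.1,
    sum_sum_eq_one_of_mem_couplings hb hu.2]
  norm_num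

lemma pairNormSq_le_two (ha : a ∈ posSimplex n) (hb : b ∈ posSimplex m)
    (hu : u ∈ pairFeasible a b g) : pairNormSq u ≤ 2 := by
  rw [pairNormSq_eq_sum_pairFlat, ← sum_pairFlat_eq_two ha hb hu]
  exact Finset.sum_le_sum fun e _ =>
    pow_le_of_le_one (pairFlat_nonneg hu e) (pairFlat_le_one ha hb hu e) two_ne_zero

end Feasible

lemma pairKL_add_pairKL {x y : LRPair n m r} (hx : ∀ e, 0 < pairFlat x e)
    (hy : ∀ e, 0 < pairFlat y e) :
    pairKL x y + pairKL y x =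
      jeffreysDiv (pairFlat y) (pairFlat x) - ∑ e, pairFlat x e - ∑ e, pairFlat y e := by
  rw [pairKL_eq_sum_pairFlat, pairKL_eq_sum_pairFlat, jeffreysDiv, ← Finset.sum_add_distrib,
    ← Finset.sum_sub_distrib, ← Finset.sum_sub_distrib]
  refine Finset.sum_congr rfl fun e _ => ?_
  rw [log_div (hx e).ne' (hy e).ne', log_div (hy e).ne' (hx e).ne']
  ring

end Pairs

section Objective

open scoped Matrix.Norms.L2Operator

variable {n m r : ℕ}

lemma specNorm_nonneg (C : Mat n m) : 0 ≤ specNorm C := norm_nonneg _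

lemma abs_dotProduct_mulVec_le (C : Mat n m) (u : Fin n → ℝ) (v : Fin m → ℝ) :
    |u ⬝ᵥ C *ᵥ v| ≤ specNorm C / 2 * (u ⬝ᵥ u + v ⬝ᵥ v) := by
  have hdot : ∀ {ι : Type} [Fintype ι] (w w' : ι → ℝ),
      w ⬝ᵥ w' = ⟪WithLp.toLp 2 w, WithLp.toLp 2 w'⟫ := by
    intro ι _ w w'
    rw [EuclideanSpace.inner_toLp_toLp, star_trivial, dotProduct_comm]
  have hsq : ∀ {ι : Type} [Fintype ι] (w : ι → ℝ), w ⬝ᵥ w = ‖WithLp.toLp 2 w‖ ^ 2 := by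
    intro ι _ w
    rw [hdot, real_inner_self_eq_norm_sq]
  have hC := specNorm_nonneg C
  calc |u ⬝ᵥ C *ᵥ v| ≤ ‖WithLp.toLp 2 u‖ * ‖WithLp.toLp 2 (C *ᵥ v)‖ := by
        rw [hdot]; exact abs_real_inner_le_norm _ _
    _ ≤ ‖WithLp.toLp 2 u‖ * (specNorm C * ‖WithLp.toLp 2 v‖) := by
        gcongr; exact Matrix.l2_opNorm_mulVec C (WithLp.toLp 2 v)
    _ ≤ specNorm C / 2 * (u ⬝ᵥ u + v ⬝ᵥ v) := by
        rw [hsq u, hsq v]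
        nlinarith [two_mul_le_add_sq ‖WithLp.toLp 2 u‖ ‖WithLp.toLp 2 v‖]

lemma le_specNorm_diagonal (d : Fin r → ℝ) (k : Fin r) : d k ≤ specNorm (diagonal d) := by
  change d k ≤ ‖diagonal d‖
  rw [Matrix.l2_opNorm_diagonal]
  exact (le_abs_self _).trans (norm_le_pi_norm d k)

lemma frobInner_mul_diagonal_mul_transpose (C : Mat n m) (d : Fin r → ℝ) (U : Mat n r)
    (V : Mat m r) : frobInner C (U * diagonal d * Vᵀ) = ∑ k, d k * (Uᵀ k ⬝ᵥ C *ᵥ Vᵀ k) := by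
  simp only [frobInner, mul_apply, diagonal_apply, mul_ite, mul_zero, Finset.sum_ite_eq',
    Finset.mem_univ, if_true, transpose_apply, dotProduct, mulVec, Finset.mul_sum]
  rw [Finset.sum_congr rfl fun i _ => Finset.sum_comm, Finset.sum_comm]
  exact Finset.sum_congr rfl fun k _ => Finset.sum_congr rfl fun i _ =>
    Finset.sum_congr rfl fun j _ => by ring

lemma abs_frobInner_mul_diagonal_mul_transpose_le (C : Mat n m) {d : Fin r → ℝ}
    (hd : ∀ k, 0 ≤ d k) (U : Mat n r) (V : Mat m r) :
    |frobInner C (U * diagonal d * Vᵀ)| ≤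
      specNorm C * specNorm (diagonal d) / 2 * pairNormSq (U, V) := by
  have hcol : ∀ k, d k * |Uᵀ k ⬝ᵥ C *ᵥ Vᵀ k| ≤
      specNorm C * specNorm (diagonal d) / 2 * (Uᵀ k ⬝ᵥ Uᵀ k + Vᵀ k ⬝ᵥ Vᵀ k) := by
    intro k
    have := mul_le_mul (le_specNorm_diagonal d k) (abs_dotProduct_mulVec_le C (Uᵀ k) (Vᵀ k))
      (abs_nonneg _) ((hd k).trans (le_specNorm_diagonal d k))
    linarith
  have hnorm : pairNormSq (U, V) = ∑ k, (Uᵀ k ⬝ᵥ Uᵀ k + Vᵀ k ⬝ᵥ Vᵀ k) := by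
    simp only [pairNormSq, dotProduct, transpose_apply, Finset.sum_add_distrib, sq]
    rw [Finset.sum_comm (f := fun i k => U i k * U i k),
      Finset.sum_comm (f := fun j k => V j k * V j k)]
  rw [frobInner_mul_diagonal_mul_transpose, hnorm, Finset.mul_sum]
  refine (Finset.abs_sum_le_sum_abs _ _).trans (Finset.sum_le_sum fun k _ => ?_)
  rw [abs_mul, abs_of_nonneg (hd k)]
  exact hcol k

lemma pairInner_gradf (C : Mat n m) (g : Fin r → ℝ) (ε : ℝ) (X W : LRPair n m r) :
    pairInner (gradf C g ε X) W =
      frobInner C (W.1 * diagonal (fun k => (g k)⁻¹) * X.2ᵀ) +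
        frobInner C (X.1 * diagonal (fun k => (g k)⁻¹) * W.2ᵀ) + ε * pairInner (logPair X) W := by
  have hQ : ∑ i, ∑ k, (C * X.2) i k * (g k)⁻¹ * W.1 i k =
      frobInner C (W.1 * diagonal (fun k => (g k)⁻¹) * X.2ᵀ) := by
    simp only [frobInner_mul_diagonal_mul_transpose, dotProduct, mulVec, mul_apply,
      transpose_apply, Finset.mul_sum, Finset.sum_mul]
    rw [Finset.sum_comm]
    exact Finset.sum_congr rfl fun k _ => Finset.sum_congr rfl fun i _ =>
      Finset.sum_congr rfl fun j _ => by ring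
  have hR : ∑ j, ∑ k, (Cᵀ * X.1) j k * (g k)⁻¹ * W.2 j k =
      frobInner C (X.1 * diagonal (fun k => (g k)⁻¹) * W.2ᵀ) := by
    simp only [frobInner_mul_diagonal_mul_transpose, dotProduct, mulVec, mul_apply,
      transpose_apply, Finset.mul_sum, Finset.sum_mul]
    rw [Finset.sum_comm]
    refine Finset.sum_congr rfl fun k _ => ?_
    rw [Finset.sum_comm]
    exact Finset.sum_congr rfl fun i _ => Finset.sum_congr rfl fun j _ => by ring
  rw [← hQ, ← hR]
  simp only [pairInner, frobInner, gradf, logPair, of_apply, add_mul, Finset.sum_add_distrib,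
    mul_assoc, ← Finset.mul_sum]
  ring

lemma frobInner_add (C A B : Mat n m) : frobInner C (A + B) = frobInner C A + frobInner C B := by
  simp only [frobInner, Matrix.add_apply, mul_add, Finset.sum_add_distrib]

lemma pairFlat_logPair (X : LRPair n m r) (e : PairIndex n m r) :
    pairFlat (logPair X) e = log (pairFlat X e) := by
  rcases e with _ | _ <;> rfl

lemma matH_add_matH (u : LRPair n m r) :
    matH u.1 + matH u.2 = -∑ e, pairFlat u e * (log (pairFlat u e) - 1) := by
  rw [sum_pairFlat (fun p _ => p * (log p - 1)) u u, matH, matH, neg_add]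

lemma fobj_eq_add_pairInner_gradf (C : Mat n m) (g : Fin r → ℝ) (ε : ℝ) (X Y : LRPair n m r) :
    fobj C g ε Y = fobj C g ε X + pairInner (gradf C g ε X) (Y - X) +
      frobInner C ((Y - X).1 * diagonal (fun k => (g k)⁻¹) * (Y - X).2ᵀ) +
      ε * ∑ e, (pairFlat Y e * (log (pairFlat Y e) - log (pairFlat X e)) - pairFlat Y e +
        pairFlat X e) := by
  set D := diagonal fun k => (g k)⁻¹
  have hbilin : Y.1 * D * Y.2ᵀ = X.1 * D * X.2ᵀ + ((Y - X).1 * D * X.2ᵀ +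
      X.1 * D * (Y - X).2ᵀ + (Y - X).1 * D * (Y - X).2ᵀ) := by
    simp only [Prod.fst_sub, Prod.snd_sub, transpose_sub, Matrix.sub_mul, Matrix.mul_sub]
    abel
  have hent : -(matH Y.1 + matH Y.2) = -(matH X.1 + matH X.2) +
      pairInner (logPair X) (Y - X) + ∑ e, (pairFlat Y e * (log (pairFlat Y e) -
        log (pairFlat X e)) - pairFlat Y e + pairFlat X e) := by
    simp only [matH_add_matH, pairInner_eq_sum_pairFlat, pairFlat_logPair, map_sub, Pi.sub_apply,
      neg_neg, ← Finset.sum_add_distrib]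
    exact Finset.sum_congr rfl fun e _ => by ring
  rw [fobj, fobj, pairInner_gradf, hbilin, frobInner_add, frobInner_add, frobInner_add]
  linear_combination ε * hent

lemma fobj_le_add_pairInner_gradf (C : Mat n m) {g : Fin r → ℝ} (hg : ∀ k, 0 < g k) {ε : ℝ}
    (hε : 0 ≤ ε) {X Y : LRPair n m r} (hX : ∀ e, 0 < pairFlat X e ∧ pairFlat X e ≤ 1)
    (hY : ∀ e, 0 < pairFlat Y e ∧ pairFlat Y e ≤ 1) :
    fobj C g ε Y ≤ fobj C g ε X + pairInner (gradf C g ε X) (Y - X) +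
      (specNorm C * specNorm (diagonal fun k => (g k)⁻¹) / 2 + ε) *
        jeffreysDiv (pairFlat Y) (pairFlat X) := by
  have hκ : 0 ≤ specNorm C * specNorm (diagonal fun k => (g k)⁻¹) / 2 :=
    div_nonneg (mul_nonneg (specNorm_nonneg _) (specNorm_nonneg _)) zero_le_two
  have hbilin := (le_abs_self _).trans
    (abs_frobInner_mul_diagonal_mul_transpose_le C (fun k => (inv_pos.2 (hg k)).le)
      (Y - X).1 (Y - X).2)
  have hsq : pairNormSq ((Y - X).1, (Y - X).2) ≤ jeffreysDiv (pairFlat Y) (pairFlat X) := by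
    rw [pairNormSq_eq_sum_pairFlat]
    simp only [Prod.mk.eta, map_sub, Pi.sub_apply]
    exact sum_sq_sub_le_jeffreysDiv hY hX
  have hent := sum_mul_log_sub_sub_le_jeffreysDiv (fun e => (hY e).1) (fun e => (hX e).1)
  rw [fobj_eq_add_pairInner_gradf C g ε X Y]
  nlinarith [mul_le_mul_of_nonneg_left hsq hκ, mul_le_mul_of_nonneg_left hent hε]

lemma bddBelow_fobj_image {a : Fin n → ℝ} (ha : a ∈ posSimplex n) {b : Fin m → ℝ}
    (hb : b ∈ posSimplex m) {g : Fin r → ℝ} (hg : ∀ k, 0 < g k) (C : Mat n m) {ε : ℝ}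
    (hε : 0 ≤ ε) : BddBelow (fobj C g ε '' pairFeasible a b g) := by
  refine ⟨-(specNorm C * specNorm (diagonal fun k => (g k)⁻¹) +
    ε * Fintype.card (PairIndex n m r)), ?_⟩
  rintro _ ⟨u, hu, rfl⟩
  have hbilin := neg_abs_le _ |>.trans' (neg_le_neg
    (abs_frobInner_mul_diagonal_mul_transpose_le C (fun k => (inv_pos.2 (hg k)).le) u.1 u.2))
  have hnorm : pairNormSq (u.1, u.2) ≤ 2 := pairNormSq_le_two ha hb hu
  have hent : matH u.1 + matH u.2 ≤ Fintype.card (PairIndex n m r) := by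
    rw [matH_add_matH, ← Finset.sum_neg_distrib, ← Finset.card_univ, ← nsmul_one,
      ← Finset.sum_const]
    exact Finset.sum_le_sum fun e _ =>
      neg_le.1 (neg_one_le_mul_log_sub_one (pairFlat_nonneg hu e))
  have hκ : 0 ≤ specNorm C * specNorm (diagonal fun k => (g k)⁻¹) / 2 :=
    div_nonneg (mul_nonneg (specNorm_nonneg _) (specNorm_nonneg _)) zero_le_two
  rw [fobj]
  nlinarith [mul_le_mul_of_nonneg_left hnorm hκ, mul_le_mul_of_nonneg_left hent hε]

lemma LOTfix_le_fobj {a : Fin n → ℝ} (ha : a ∈ posSimplex n) {b : Fin m → ℝ}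
    (hb : b ∈ posSimplex m) {g : Fin r → ℝ} (hg : ∀ k, 0 < g k) (C : Mat n m) {ε : ℝ}
    (hε : 0 ≤ ε) {u : LRPair n m r} (hu : u ∈ pairFeasible a b g) :
    LOTfix a b g C ε ≤ fobj C g ε u :=
  csInf_le (bddBelow_fobj_image ha hb hg C hε) ⟨u, hu, rfl⟩

end Objective

lemma exists_lt_le_div_of_le_sub {f s : ℕ → ℝ} {N : ℕ} (hN : 0 < N) {fmin : ℝ}
    (hstep : ∀ k, f (k + 1) ≤ f k - s k) (hmin : fmin ≤ f N) :
    ∃ k < N, s k ≤ (f 0 - fmin) / N := by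
  have hsum : ∑ k ∈ range N, s k ≤ ∑ _k ∈ range N, (f 0 - fmin) / N := by
    rw [Finset.sum_const, Finset.card_range, nsmul_eq_mul,
      mul_div_cancel₀ _ (Nat.cast_ne_zero.2 hN.ne')]
    calc ∑ k ∈ range N, s k ≤ ∑ k ∈ range N, (f k - f (k + 1)) :=
          Finset.sum_le_sum fun k _ => by linarith [hstep k]
      _ = f 0 - f N := Finset.sum_range_sub' f N
      _ ≤ f 0 - fmin := by linarith
  obtain ⟨k, hk, hle⟩ := Finset.exists_le_of_sum_le (nonempty_range_iff.2 hN.ne') hsum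
  exact ⟨k, Finset.mem_range.1 hk, hle⟩

lemma half_add_le_sqrt_two_mul_sq_add_sq {s t : ℝ} (hs : 0 ≤ s) (ht : 0 ≤ t) :
    s / 2 + t ≤ √(2 * (s ^ 2 + t ^ 2)) := by
  rw [Real.le_sqrt (by positivity) (by positivity)]
  nlinarith [sq_nonneg (s / 2 - t), sq_nonneg s]

section MirrorStep

variable {n m r : ℕ} {a : Fin n → ℝ} {b : Fin m → ℝ} {g : Fin r → ℝ} {x y : LRPair n m r}

lemma isMinOn_klProxObj_pairFlat {K : Set (LRPair n m r)} {G : LRPair n m r} {c : ℝ}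
    (hmin : IsMinOn (fun u => pairInner G u + c * pairKL u x) K y) :
    IsMinOn (klProxObj (pairFlat G) c (pairFlat x)) (pairFlat '' K) (pairFlat y) := by
  refine isMinOn_iff.2 ?_
  rintro _ ⟨u, hu, rfl⟩
  simpa only [klProxObj_pairFlat] using isMinOn_iff.1 hmin u hu

lemma pairFlat_pos_of_isMinOn {G : LRPair n m r} {c : ℝ} (hc : 0 < c)
    (hx : ∀ e, 0 < pairFlat x e) (hxK : x ∈ pairFeasible a b g) (hyK : y ∈ pairFeasible a b g)
    (hmin : IsMinOn (fun u => pairInner G u + c * pairKL u x) (pairFeasible a b g) y)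
    (e : PairIndex n m r) : 0 < pairFlat y e :=
  pos_of_isMinOn_klProxObj hc ((convex_pairFeasible a b g).linear_image pairFlat) hx
    (Set.mem_image_of_mem _ hxK) (pairFlat_nonneg hyK) (Set.mem_image_of_mem _ hyK)
    (isMinOn_klProxObj_pairFlat hmin) e

lemma fobj_le_sub_of_isMinOn (ha : a ∈ posSimplex n) (hb : b ∈ posSimplex m)
    (hg : ∀ k, 0 < g k) (C : Mat n m) {ε L : ℝ} (hε : 0 ≤ ε)
    (hL : specNorm C * specNorm (diagonal fun k => (g k)⁻¹) / 2 + ε ≤ L)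
    (hx : ∀ e, 0 < pairFlat x e) (hxK : x ∈ pairFeasible a b g)
    (hy : ∀ e, 0 < pairFlat y e) (hyK : y ∈ pairFeasible a b g)
    (hmin : IsMinOn (fun u => pairInner (gradf C g ε x) u + 2 * L * pairKL u x)
      (pairFeasible a b g) y) :
    fobj C g ε y ≤ fobj C g ε x - L * jeffreysDiv (pairFlat y) (pairFlat x) := by
  have hK := (convex_pairFeasible a b g).linear_image pairFlat
  have hfirst := sum_mul_sub_le_of_isMinOn_klProxObj hK hx (Set.mem_image_of_mem _ hxK) hy
    (Set.mem_image_of_mem _ hyK) (isMinOn_klProxObj_pairFlat hmin)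
  have hinner : pairInner (gradf C g ε x) (y - x) =
      ∑ e, pairFlat (gradf C g ε x) e * (pairFlat y e - pairFlat x e) := by
    simp only [pairInner_eq_sum_pairFlat, map_sub, Pi.sub_apply]
  have hsmooth := fobj_le_add_pairInner_gradf C hg hε
    (fun e => ⟨hx e, pairFlat_le_one ha hb hxK e⟩) (fun e => ⟨hy e, pairFlat_le_one ha hb hyK e⟩)
  rw [hinner] at hsmooth
  nlinarith [mul_le_mul_of_nonneg_right hL (jeffreysDiv_nonneg hy hx)]

end MirrorStep

/-- Non-asymptotic stationary convergence of mirror descent for the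
fixed-marginal objective `f_ε` on `Π_{a,g} × Π_{b,g}` with step `γ = 1/(2 L_ε)`,
`L_ε = sqrt(2(‖C‖₂² ‖Diag(1/g)‖₂² + ε²))`:
`min_{0 ≤ k ≤ N−1} Δ_ε(x_k, γ) ≤ 4 L_ε D₀ / N`. -/
theorem mirror_descent_fixed_marginal_convergence {n m r : ℕ}
    (a : Fin n → ℝ) (ha : a ∈ posSimplex n)
    (b : Fin m → ℝ) (hb : b ∈ posSimplex m)
    (g : Fin r → ℝ) (hg : g ∈ posSimplex r)
    (C : Mat n m) (ε : ℝ) (hε : 0 ≤ ε)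
    (N : ℕ) (hN : 1 ≤ N)
    (L γ : ℝ)
    (hL : L = Real.sqrt (2 * (specNorm C ^ 2 *
      specNorm (Matrix.diagonal fun i => (g i)⁻¹) ^ 2 + ε ^ 2)))
    (hγ : γ = 1 / (2 * L))
    (x : ℕ → LRPair n m r)
    (h₀ : x 0 ∈ pairFeasible a b g)
    (hpos₀ : (∀ i j, 0 < (x 0).1 i j) ∧ ∀ i j, 0 < (x 0).2 i j)
    (hiter : ∀ k : ℕ, x (k + 1) ∈ pairFeasible a b g ∧
      ∀ u ∈ pairFeasible a b g,
        pairInner (gradf C g ε (x k)) (x (k + 1)) + (1 / γ) * pairKL (x (k + 1)) (x k) ≤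
          pairInner (gradf C g ε (x k)) u + (1 / γ) * pairKL u (x k))
    (D₀ : ℝ) (hD₀ : D₀ = fobj C g ε (x 0) - LOTfix a b g C ε) :
    ∃ k < N, (1 / γ ^ 2) * (pairKL (x k) (x (k + 1)) + pairKL (x (k + 1)) (x k)) ≤
      4 * L * D₀ / N := by
  rcases (hL ▸ Real.sqrt_nonneg _ : 0 ≤ L).eq_or_lt with hL₀ | hL₀
  -- `L = 0` makes `γ = 1 / 0 = 0`, so the left-hand side vanishes.
  · exact ⟨0, hN, by simp [hγ, ← hL₀]⟩
  have hc : 1 / γ = 2 * L := by rw [hγ, one_div_one_div]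
  have hLκ : specNorm C * specNorm (diagonal fun k => (g k)⁻¹) / 2 + ε ≤ L := by
    rw [hL, ← mul_pow]
    exact half_add_le_sqrt_two_mul_sq_add_sq (mul_nonneg (specNorm_nonneg _) (specNorm_nonneg _)) hε
  have hfeas : ∀ k, x k ∈ pairFeasible a b g := fun k => k.casesOn h₀ fun k => (hiter k).1
  have hmin : ∀ k, IsMinOn (fun u => pairInner (gradf C g ε (x k)) u + 2 * L * pairKL u (x k))
      (pairFeasible a b g) (x (k + 1)) := fun k => isMinOn_iff.2 (hc ▸ (hiter k).2)
  have hpos : ∀ k e, 0 < pairFlat (x k) e := by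
    intro k
    induction k with
    | zero => rintro (⟨i, j⟩ | ⟨i, j⟩); exacts [hpos₀.1 i j, hpos₀.2 i j]
    | succ k ih =>
      exact pairFlat_pos_of_isMinOn (by positivity) ih (hfeas k) (hfeas (k + 1)) (hmin k)
  obtain ⟨k, hk, hJ⟩ := exists_lt_le_div_of_le_sub (f := fun k => fobj C g ε (x k)) hN
    (fun k => fobj_le_sub_of_isMinOn ha hb hg.1 C hε hLκ (hpos k) (hfeas k) (hpos (k + 1))
      (hfeas (k + 1)) (hmin k)) (LOTfix_le_fobj ha hb hg.1 C hε (hfeas N))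
  refine ⟨k, hk, ?_⟩
  rw [pairKL_add_pairKL (hpos k) (hpos (k + 1)), sum_pairFlat_eq_two ha hb (hfeas k),
    sum_pairFlat_eq_two ha hb (hfeas (k + 1)), ← _root_.one_div_pow, hc]
  rw [← hD₀] at hJ
  calc (2 * L) ^ 2 * (jeffreysDiv (pairFlat (x (k + 1))) (pairFlat (x k)) - 2 - 2)
      ≤ 4 * L * (L * jeffreysDiv (pairFlat (x (k + 1))) (pairFlat (x k))) := by nlinarith
    _ ≤ 4 * L * (D₀ / N) := by gcongr
    _ = 4 * L * D₀ / N := by ring
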